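/- Let k ≥ 2 and n = 2k. Then the radio number of C_n □ C_n equals ((n² − 2)/2)·(k + 2) + 2. -/

import Mathlib

open SimpleGraph

/-- `c` is a radio labeling of `G`: labels are positive integers and for every two
distinct vertices `u, v` we have `d(u,v) + |c(u) - c(v)| ≥ 1 + diam(G)`. -/
def IsRadioLabeling {V : Type*} (G : SimpleGraph V) (c : V → ℕ) : Prop :=
  (∀ v, 1 ≤ c v) ∧
    ∀ u v : V, u ≠ v → G.diam + 1 ≤ G.dist u v + Nat.dist (c u) (c v)

/-- The span of a labeling: the maximum label used. -/
def labelSpan {V : Type*} [Fintype V] (c : V → ℕ) : ℕ := Finset.univ.sup c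

/-- The radio number of `G`: the minimum span over all radio labelings. -/
noncomputable def radioNumber {V : Type*} [Fintype V] (G : SimpleGraph V) : ℕ :=
  sInf {s | ∃ c : V → ℕ, IsRadioLabeling G c ∧ labelSpan c = s}

/-!
In `C_{2k} □ C_{2k}` every vertex `v` has the antipode `v + (k, k)`, and
`d(u, v) + d(u, v + (k, k)) = 2k` for all `u, v`. Hence the diameter is `2k`, and the triangle
inequality through the antipode of `u` gives `d(u, v) + d(v, w) + d(u, w) ≤ 4k`. Adding the three
radio conditions of vertices with labels `a < b < c` then gives `c - a ≥ k + 2`; so in increasing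
order the labels `s₀ < s₁ < ⋯` of the `4k²` vertices satisfy `s_{2j} ≥ 1 + j (k + 2)`, and the
last one is at least `2 + (2k² - 1)(k + 2)`.

Conversely, label `P t` by `1 + t (k + 2)` and its antipode by `2 + t (k + 2)`, where
`P t = (⌊t / 2⌋ + t k, ⌊t / 2k⌋)`. Consecutive base points are at distance `k - 1` or `k`, which is
exactly what the radio condition between neighbouring pairs requires, and for `t < 2k²` the points
`P t` and their antipodes exhaust the torus.
-/

open Fin.NatCast

theorem Finset.exists_two_add_mul_le_of_gap {g : ℕ} (m : ℕ) {S : Finset ℕ}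
    (hpos : ∀ a ∈ S, 1 ≤ a)
    (hgap : ∀ a ∈ S, ∀ b ∈ S, ∀ c ∈ S, a < b → b < c → a + g ≤ c)
    (hcard : 2 * m + 2 ≤ S.card) : ∃ x ∈ S, 2 + m * g ≤ x := by
  induction m generalizing S with
  | zero =>
    obtain ⟨a, ha, b, hb, hab⟩ := Finset.one_lt_card.mp (by omega : 1 < S.card)
    rcases Nat.lt_or_gt_of_ne hab with h | h
    · exact ⟨b, hb, by have := hpos a ha; omega⟩
    · exact ⟨a, ha, by have := hpos b hb; omega⟩
  | succ m ih =>
    have hS : S.Nonempty := Finset.card_pos.mp (by omega)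
    set S₁ := S.erase (S.max' hS)
    have hS₁ : S₁.Nonempty :=
      Finset.card_pos.mp (by rw [Finset.card_erase_of_mem (S.max'_mem hS)]; omega)
    set S₂ := S₁.erase (S₁.max' hS₁)
    have hsub : S₂ ⊆ S := (Finset.erase_subset _ _).trans (Finset.erase_subset _ _)
    obtain ⟨x, hx, hxm⟩ := ih (S := S₂) (fun a ha => hpos a (hsub ha))
      (fun a ha b hb c hc => hgap a (hsub ha) b (hsub hb) c (hsub hc))
      (by rw [Finset.card_erase_of_mem (S₁.max'_mem hS₁),
        Finset.card_erase_of_mem (S.max'_mem hS)]; omega)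
    refine ⟨S.max' hS, S.max'_mem hS, ?_⟩
    have := hgap x (hsub hx) _ (Finset.mem_of_mem_erase (S₁.max'_mem hS₁)) _ (S.max'_mem hS)
      (S₁.lt_max'_of_mem_erase_max' hS₁ hx) (S.lt_max'_of_mem_erase_max' hS (S₁.max'_mem hS₁))
    rw [Nat.succ_mul]
    omega

section RadioLabeling

variable {V : Type*} {G : SimpleGraph V} {c : V → ℕ}

theorem IsRadioLabeling.three_mul_diam_add_one_le (hc : IsRadioLabeling G c) {u v w : V}
    (huv : c u < c v) (hvw : c v < c w) :
    3 * (G.diam + 1) ≤ G.dist u v + G.dist v w + G.dist u w + 2 * (c w - c u) := by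
  have h₁ := hc.2 u v (fun h => by simp [h] at huv)
  have h₂ := hc.2 v w (fun h => by simp [h] at hvw)
  have h₃ := hc.2 u w (fun h => by simp [h] at huv; omega)
  rw [Nat.dist_eq_sub_of_le huv.le] at h₁
  rw [Nat.dist_eq_sub_of_le hvw.le] at h₂
  rw [Nat.dist_eq_sub_of_le (huv.trans hvw).le] at h₃
  omega

theorem IsRadioLabeling.two_add_mul_le_labelSpan [Fintype V] (hc : IsRadioLabeling G c)
    (htri : ∀ u v w, G.dist u v + G.dist v w + G.dist u w ≤ 2 * G.diam)
    {g : ℕ} (hg : 2 * g ≤ G.diam + 4) {m : ℕ} (hm : 2 * m + 2 ≤ Fintype.card V) :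
    2 + m * g ≤ labelSpan c := by
  have hinj : Function.Injective c := by
    intro u v huv
    by_contra hne
    have h₁ := hc.2 u v hne
    have h₂ := htri u v u
    rw [huv, Nat.dist_self] at h₁
    rw [dist_comm (u := v), dist_self] at h₂
    omega
  obtain ⟨_, hx, hle⟩ := (Finset.univ.image c).exists_two_add_mul_le_of_gap (g := g) m
    (by simpa using fun v => hc.1 v)
    (by
      simp only [Finset.mem_image, Finset.mem_univ, true_and]
      rintro _ ⟨u, rfl⟩ _ ⟨v, rfl⟩ _ ⟨w, rfl⟩ huv hvw
      have := hc.three_mul_diam_add_one_le huv hvw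
      have := htri u v w
      omega)
    (by rwa [Finset.card_image_of_injective _ hinj, Finset.card_univ])
  obtain ⟨v, -, rfl⟩ := Finset.mem_image.mp hx
  exact hle.trans (Finset.le_sup (Finset.mem_univ v))

theorem radioNumber_eq_of_isRadioLabeling [Fintype V] {L : ℕ} (hc : IsRadioLabeling G c)
    (hspan : labelSpan c ≤ L) (hL : ∀ c', IsRadioLabeling G c' → L ≤ labelSpan c') :
    radioNumber G = L :=
  le_antisymm (le_trans (Nat.sInf_le ⟨c, hc, rfl⟩) hspan) <|
    le_csInf ⟨labelSpan c, c, hc, rfl⟩ fun _ ⟨c', hc', hs⟩ => hs ▸ hL c' hc'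

theorem exists_isRadioLabeling_of_surjective [Fintype V] {N : ℕ} {x : Fin N → V}
    (hx : Function.Surjective x) {f : ℕ → ℕ} (hf : Monotone f) (hf0 : 1 ≤ f 0)
    (hpair : ∀ i j : Fin N, i < j → G.diam + 1 ≤ G.dist (x i) (x j) + (f j - f i)) :
    ∃ c, IsRadioLabeling G c ∧ labelSpan c ≤ f (N - 1) := by
  set y := Function.surjInv hx
  have hy : ∀ v, x (y v) = v := Function.surjInv_eq hx
  refine ⟨fun v => f (y v), ⟨fun v => hf0.trans (hf (Nat.zero_le _)), fun u v huv => ?_⟩,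
    Finset.sup_le fun v _ => hf (by omega)⟩
  have hne : y u ≠ y v := fun h => huv (by rw [← hy u, h, hy v])
  rcases lt_or_gt_of_ne hne with h | h
  · have := hpair _ _ h
    rw [hy, hy] at this
    rwa [Nat.dist_eq_sub_of_le (hf h.le)]
  · have := hpair _ _ h
    rw [hy, hy, dist_comm] at this
    rwa [Nat.dist_comm, Nat.dist_eq_sub_of_le (hf h.le)]

end RadioLabeling

def pairSeq {V : Type*} (σ : V → V) (P : ℕ → V) (i : ℕ) : V := σ^[i % 2] (P (i / 2))

def pairLabel (g i : ℕ) : ℕ := 1 + i / 2 * g + i % 2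

theorem pairLabel_mono {g : ℕ} (hg : 1 ≤ g) : Monotone (pairLabel g) := by
  intro i j hij
  unfold pairLabel
  rcases (Nat.div_le_div_right hij (c := 2)).eq_or_lt with hq | hq
  · rw [hq]; omega
  · have : (i / 2 + 1) * g ≤ j / 2 * g := Nat.mul_le_mul_right g hq
    rw [Nat.succ_mul] at this
    omega

namespace SimpleGraph

variable {V : Type*} {G : SimpleGraph V}

theorem Walk.le_add_length_of_adj_le {f : V → ℕ} (hf : ∀ a b, G.Adj a b → f a ≤ f b + 1)
    {u v : V} : ∀ p : G.Walk u v, f u ≤ f v + p.length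
  | .nil => by simp
  | .cons hab p => by
    have := hf _ _ hab
    have := p.le_add_length_of_adj_le hf
    rw [Walk.length_cons]
    omega

theorem Reachable.le_add_dist_of_adj_le {f : V → ℕ} (hf : ∀ a b, G.Adj a b → f a ≤ f b + 1)
    {u v : V} (huv : G.Reachable u v) : f u ≤ f v + G.dist u v := by
  obtain ⟨p, hp⟩ := huv.exists_walk_length_eq_dist
  exact hp ▸ p.le_add_length_of_adj_le hf

theorem Preconnected.dist_boxProd {α β : Type*} {G : SimpleGraph α} {H : SimpleGraph β}
    (hG : G.Preconnected) (hH : H.Preconnected) (x y : α × β) :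
    (G □ H).dist x y = G.dist x.1 y.1 + H.dist x.2 y.2 := by
  rw [dist, edist_boxProd, ENat.toNat_add (edist_ne_top_iff_reachable.mpr (hG _ _))
    (edist_ne_top_iff_reachable.mpr (hH _ _))]
  rfl

def IsAntipodalMap (G : SimpleGraph V) (D : ℕ) (σ : V → V) : Prop :=
  ∀ u v, G.dist u v + G.dist u (σ v) = D

namespace IsAntipodalMap

variable {D : ℕ} {σ : V → V}

theorem dist_le (h : G.IsAntipodalMap D σ) (u v : V) : G.dist u v ≤ D := by
  have := h u v; omega

theorem dist_map_self (h : G.IsAntipodalMap D σ) (u : V) : G.dist u (σ u) = D := by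
  simpa using h u u

theorem dist_map_left (h : G.IsAntipodalMap D σ) (u v : V) :
    G.dist (σ u) v + G.dist u v = D := by
  rw [dist_comm, dist_comm (u := u), add_comm]; exact h v u

theorem dist_map_map (h : G.IsAntipodalMap D σ) (u v : V) :
    G.dist (σ u) (σ v) = G.dist u v := by
  have := h (σ u) v; have := h.dist_map_left u v; omega

theorem diam_eq (h : G.IsAntipodalMap D σ) [Finite V] [Nonempty V] (hG : G.Connected) :
    G.diam = D := by
  obtain ⟨u, v, huv⟩ := G.exists_dist_eq_diam
  exact le_antisymm (huv ▸ h.dist_le u v)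
    (h.dist_map_self u ▸ dist_le_diam (connected_iff_ediam_ne_top.mp hG))

theorem dist_add_dist_add_dist_le (h : G.IsAntipodalMap D σ) (hG : G.Connected) (u v w : V) :
    G.dist u v + G.dist v w + G.dist u w ≤ 2 * D := by
  have := hG.dist_triangle (u := v) (v := σ u) (w := w)
  have := h v u
  have := h.dist_map_left u w
  rw [dist_comm (u := u) (v := v)]
  omega

theorem le_dist_pairSeq_add (h : G.IsAntipodalMap D σ) {P : ℕ → V} {g : ℕ}
    (hg : D + 2 ≤ 2 * g)
    (hstep : ∀ t, D + 1 ≤ G.dist (P t) (P (t + 1)) + g ∧ G.dist (P t) (P (t + 1)) + 2 ≤ g)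
    {i j : ℕ} (hij : i < j) :
    D + 1 ≤ G.dist (pairSeq σ P i) (pairSeq σ P j) + (pairLabel g j - pairLabel g i) := by
  obtain ⟨t, e, rfl, he⟩ : ∃ t e, i = 2 * t + e ∧ e < 2 := ⟨i / 2, i % 2, by omega, by omega⟩
  obtain ⟨s, e', rfl, he'⟩ : ∃ s e', j = 2 * s + e' ∧ e' < 2 :=
    ⟨j / 2, j % 2, by omega, by omega⟩
  have hdiv : ∀ t e, e < 2 → (2 * t + e) / 2 = t ∧ (2 * t + e) % 2 = e := fun t e he =>
    ⟨by omega, by omega⟩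
  simp only [pairSeq, pairLabel, (hdiv t e he).1, (hdiv t e he).2, (hdiv s e' he').1,
    (hdiv s e' he').2]
  rcases Nat.lt_or_ge s (t + 2) with hs | hs
  · obtain rfl | rfl : s = t ∨ s = t + 1 := by omega
    · obtain ⟨rfl, rfl⟩ : e = 0 ∧ e' = 1 := by omega
      simp [h.dist_map_self]
    · have := hstep t
      have := h (P t) (P (t + 1))
      have := h.dist_map_left (P t) (P (t + 1))
      have := h.dist_map_map (P t) (P (t + 1))
      rw [Nat.succ_mul]
      interval_cases e <;> interval_cases e' <;>
        simp only [Function.iterate_zero, id, Function.iterate_one] <;> omega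
  · have : (t + 2) * g ≤ s * g := Nat.mul_le_mul_right g hs
    rw [add_mul] at this
    omega

end IsAntipodalMap

end SimpleGraph

section Cycle

variable {n : ℕ}

def cycleNorm (x : Fin n) : ℕ := min x.val (n - x.val)

theorem cycleNorm_le_add_one_of_adj {x y : Fin n} (h : (cycleGraph n).Adj x y) :
    cycleNorm x ≤ cycleNorm y + 1 := by
  have hval : ∀ a b : Fin n, (a - b).val = 1 → a.val = b.val + 1 ∨ a.val + n = b.val + 1 := by
    intro a b hab
    rcases le_or_gt b a with hba | hba
    · rw [Fin.sub_val_of_le hba] at hab; omega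
    · rw [Fin.coe_sub_iff_lt.mpr hba] at hab; omega
  have := x.isLt
  have := y.isLt
  unfold cycleNorm
  rcases cycleGraph_adj'.mp h with h | h <;> rcases hval _ _ h with h | h <;> omega

variable [NeZero n]

theorem cycleGraph_adj_sub_right {a b : Fin n} (u : Fin n) :
    (cycleGraph n).Adj (a - u) (b - u) ↔ (cycleGraph n).Adj a b := by
  simp only [cycleGraph_adj', sub_sub_sub_cancel_right]

theorem cycleGraph_connected_of_neZero : (cycleGraph n).Connected where
  preconnected := cycleGraph_preconnected

@[simp]
theorem cycleNorm_zero : cycleNorm (0 : Fin n) = 0 := by simp [cycleNorm]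

theorem cycleNorm_natCast {d : ℕ} (hd : d ≤ n) :
    cycleNorm ((d : ℕ) : Fin n) = min d (n - d) := by
  unfold cycleNorm
  rcases hd.lt_or_eq with hd | rfl
  · rw [Fin.val_natCast, Nat.mod_eq_of_lt hd]
  · simp

theorem cycleGraph_dist_add_natCast_le (u : Fin n) (m : ℕ) :
    (cycleGraph n).dist u (u + (m : Fin n)) ≤ m := by
  induction m with
  | zero => simp
  | succ m ih =>
    have hstep : (cycleGraph n).dist (u + (m : Fin n)) (u + ((m + 1 : ℕ) : Fin n)) ≤ 1 := by
      rw [Nat.cast_succ, ← add_assoc]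
      by_cases hn : n = 1
      · subst hn; simp
      · refine (dist_eq_one_iff_adj.mpr ?_).le
        rw [cycleGraph_adj', add_sub_cancel_left, Fin.val_one', Nat.mod_eq_of_lt]
        · exact Or.inr rfl
        · have := NeZero.ne n; omega
    exact (cycleGraph_connected_of_neZero.dist_triangle (v := u + (m : Fin n))).trans (by omega)

theorem cycleGraph_dist (u v : Fin n) : (cycleGraph n).dist u v = cycleNorm (v - u) := by
  refine le_antisymm (le_min ?_ ?_) ?_
  · simpa using cycleGraph_dist_add_natCast_le u (v - u).val
  · rw [dist_comm]
    by_cases h : v = u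
    · simp [h]
    · have := cycleGraph_dist_add_natCast_le v (u - v).val
      rw [Fin.cast_val_eq_self, add_sub_cancel] at this
      rwa [← neg_sub, Fin.val_neg, if_neg (sub_ne_zero.mpr h)] at this
  · rw [dist_comm]
    simpa using (cycleGraph_preconnected v u).le_add_dist_of_adj_le
      (f := fun a => cycleNorm (a - u))
      (fun a b hab => cycleNorm_le_add_one_of_adj ((cycleGraph_adj_sub_right u).mpr hab))

theorem torus_dist (u v : Fin n × Fin n) :
    (cycleGraph n □ cycleGraph n).dist u v = cycleNorm (v.1 - u.1) + cycleNorm (v.2 - u.2) := by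
  rw [cycleGraph_preconnected.dist_boxProd cycleGraph_preconnected, cycleGraph_dist,
    cycleGraph_dist]

theorem torus_dist_add_right (u a : Fin n × Fin n) :
    (cycleGraph n □ cycleGraph n).dist u (u + a) = cycleNorm a.1 + cycleNorm a.2 := by
  simp [torus_dist]

end Cycle

section EvenTorus

variable {k : ℕ}

theorem exists_torus_digits {i : ℕ} (hi : i < 2 * k * (2 * k)) :
    ∃ q m f, i = 2 * (2 * k * q + m) + f ∧ q < k ∧ m < 2 * k ∧ f < 2 := by
  have hk : 0 < 2 * k := by
    rcases Nat.eq_zero_or_pos k with rfl | h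
    · simp at hi
    · omega
  refine ⟨i / 2 / (2 * k), i / 2 % (2 * k), i % 2, ?_, ?_, Nat.mod_lt _ hk, Nat.mod_lt _ two_pos⟩
  · rw [Nat.div_add_mod]; omega
  · have : 2 * k * (2 * k) = 2 * (2 * k * k) := by ring
    exact Nat.div_lt_of_lt_mul (by omega)

theorem half_add_mul_mod {m : ℕ} (hm : m < 2 * k) :
    (m / 2 + m * k) % (2 * k) = m / 2 + m % 2 * k := by
  have : m % 2 * k ≤ k := mul_le_of_le_one_left (Nat.zero_le k) (by omega)
  rw [Nat.add_mod, Nat.mul_mod_mul_right, Nat.mod_eq_of_lt (by omega : m / 2 < 2 * k),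
    Nat.mod_eq_of_lt (by omega)]

variable [NeZero k]

theorem cycleNorm_add_half (x : Fin (2 * k)) :
    cycleNorm (x + (k : Fin (2 * k))) + cycleNorm x = k := by
  have hk : k < 2 * k := by have := NeZero.ne k; omega
  have hx := x.isLt
  unfold cycleNorm
  rw [Fin.val_add, Fin.val_natCast, Nat.mod_eq_of_lt hk]
  rcases Nat.lt_or_ge (x.val + k) (2 * k) with h | h
  · rw [Nat.mod_eq_of_lt h]; omega
  · rw [Nat.mod_eq_sub_mod h, Nat.mod_eq_of_lt (by omega)]; omega

variable (k) in
def torusAntipode (v : Fin (2 * k) × Fin (2 * k)) : Fin (2 * k) × Fin (2 * k) :=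
  v + ((k : Fin (2 * k)), (k : Fin (2 * k)))

theorem torus_isAntipodalMap :
    (cycleGraph (2 * k) □ cycleGraph (2 * k)).IsAntipodalMap (2 * k) (torusAntipode k) := by
  intro u v
  have h₁ := cycleNorm_add_half (v.1 - u.1)
  have h₂ := cycleNorm_add_half (v.2 - u.2)
  simp only [torusAntipode, torus_dist, Prod.fst_add, Prod.snd_add, add_sub_right_comm]
  omega

theorem torus_connected : (cycleGraph (2 * k) □ cycleGraph (2 * k)).Connected :=
  cycleGraph_connected_of_neZero.boxProd cycleGraph_connected_of_neZero

theorem torus_diam : (cycleGraph (2 * k) □ cycleGraph (2 * k)).diam = 2 * k :=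
  torus_isAntipodalMap.diam_eq torus_connected

/- Consecutive base points differ by `(k, 0)`, `(k + 1, 0)` or, when `t + 1` starts a new row
(`2k ∣ t + 1`, so `t` is odd), by `(k + 1, 1)`. -/
variable (k) in
def torusBase (t : ℕ) : Fin (2 * k) × Fin (2 * k) := ((t / 2 + t * k : ℕ), (t / (2 * k) : ℕ))

theorem torusBase_succ (t : ℕ) :
    torusBase k (t + 1) = torusBase k t +
      (((k + t % 2 : ℕ) : Fin (2 * k)), ((if 2 * k ∣ t + 1 then 1 else 0 : ℕ) : Fin (2 * k))) := by
  unfold torusBase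
  ext
  · simp only [Prod.fst_add, ← Nat.cast_add]
    congr 2
    rw [Nat.succ_mul]; omega
  · simp only [Prod.snd_add, ← Nat.cast_add, Nat.succ_div]

theorem dist_torusBase_succ (t : ℕ) :
    k ≤ (cycleGraph (2 * k) □ cycleGraph (2 * k)).dist (torusBase k t) (torusBase k (t + 1)) + 1 ∧
      (cycleGraph (2 * k) □ cycleGraph (2 * k)).dist (torusBase k t) (torusBase k (t + 1)) ≤ k := by
  have hk := NeZero.ne k
  rw [torusBase_succ, torus_dist_add_right]
  dsimp only
  rw [cycleNorm_natCast (by omega)]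
  split_ifs with h
  · have : t % 2 = 1 := by
      have := (Nat.dvd_mul_right 2 k).trans h; omega
    rw [cycleNorm_natCast (by omega)]; omega
  · simp only [Nat.cast_zero, cycleNorm_zero]; omega

theorem natCast_add_mul_inj {q q' f f' : ℕ} (hq : q < k) (hq' : q' < k) (hf : f < 2)
    (hf' : f' < 2) (h : ((q + f * k : ℕ) : Fin (2 * k)) = ((q' + f' * k : ℕ) : Fin (2 * k))) :
    q = q' ∧ f = f' := by
  rw [Fin.ext_iff, Fin.val_natCast, Fin.val_natCast, Nat.mod_eq_of_lt, Nat.mod_eq_of_lt] at h <;>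
    interval_cases f <;> interval_cases f' <;> omega

theorem natCast_half_add_mul_inj {m m' : ℕ} (hm : m < 2 * k) (hm' : m' < 2 * k)
    (h : ((m / 2 + m * k : ℕ) : Fin (2 * k)) = ((m' / 2 + m' * k : ℕ) : Fin (2 * k))) :
    m = m' := by
  rw [Fin.ext_iff, Fin.val_natCast, Fin.val_natCast, half_add_mul_mod hm,
    half_add_mul_mod hm'] at h
  rcases Nat.mod_two_eq_zero_or_one m with h₁ | h₁ <;>
    rcases Nat.mod_two_eq_zero_or_one m' with h₂ | h₂ <;>
    simp only [h₁, h₂, zero_mul, one_mul] at h <;> omega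

theorem pairSeq_torusBase {t f : ℕ} (hf : f < 2) :
    pairSeq (torusAntipode k) (torusBase k) (2 * t + f) =
      (((t / 2 + t * k + f * k : ℕ) : Fin (2 * k)), ((t / (2 * k) + f * k : ℕ) : Fin (2 * k))) := by
  have h₁ : (2 * t + f) / 2 = t := by omega
  have h₂ : (2 * t + f) % 2 = f := by omega
  interval_cases f <;> simp [pairSeq, torusAntipode, torusBase, h₁, h₂]

theorem pairSeq_torusBase_digits {q m f : ℕ} (hm : m < 2 * k) (hf : f < 2) :
    pairSeq (torusAntipode k) (torusBase k) (2 * (2 * k * q + m) + f) =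
      (((m / 2 + m * k + (q + f) * k : ℕ) : Fin (2 * k)), ((q + f * k : ℕ) : Fin (2 * k))) := by
  have h₁ : (2 * k * q + m) / (2 * k) = q := by
    rw [add_comm, Nat.add_mul_div_left _ _ (Nat.pos_of_neZero _), Nat.div_eq_of_lt hm, zero_add]
  have h₂ : (2 * k * q + m) / 2 = q * k + m / 2 := by
    rw [show 2 * k * q + m = m + 2 * (q * k) by ring, Nat.add_mul_div_left _ _ two_pos]; omega
  rw [pairSeq_torusBase hf, h₁, h₂, Prod.mk.injEq, Fin.ext_iff, Fin.val_natCast, Fin.val_natCast]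
  refine ⟨?_, rfl⟩
  rw [show q * k + m / 2 + (2 * k * q + m) * k + f * k =
    m / 2 + m * k + (q + f) * k + 2 * k * (q * k) by ring, Nat.add_mul_mod_self_left]

theorem torus_pairSeq_injective :
    Function.Injective fun i : Fin (2 * k * (2 * k)) =>
      pairSeq (torusAntipode k) (torusBase k) i := by
  rintro ⟨i, hi⟩ ⟨i', hi'⟩ h
  obtain ⟨q, m, f, rfl, hq, hm, hf⟩ := exists_torus_digits hi
  obtain ⟨q', m', f', rfl, hq', hm', hf'⟩ := exists_torus_digits hi'
  simp only [pairSeq_torusBase_digits hm hf, pairSeq_torusBase_digits hm' hf', Prod.mk.injEq] at h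
  obtain ⟨rfl, rfl⟩ := natCast_add_mul_inj hq hq' hf hf' h.2
  rw [Nat.cast_add, Nat.cast_add (m' / 2 + _)] at h
  obtain rfl := natCast_half_add_mul_inj hm hm' (add_right_cancel h.1)
  rfl

theorem torus_exists_isRadioLabeling :
    ∃ c, IsRadioLabeling (cycleGraph (2 * k) □ cycleGraph (2 * k)) c ∧
      labelSpan c ≤ 2 + (2 * k ^ 2 - 1) * (k + 2) := by
  have hsurj := ((Fintype.bijective_iff_injective_and_card _).mpr
    ⟨torus_pairSeq_injective (k := k), by simp⟩).surjective
  obtain ⟨c, hc, hspan⟩ := exists_isRadioLabeling_of_surjective hsurj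
    (pairLabel_mono (g := k + 2) (by omega)) (by simp [pairLabel]) fun i j hij => by
      rw [torus_diam]
      exact torus_isAntipodalMap.le_dist_pairSeq_add (g := k + 2) (by omega)
        (fun t => by have := dist_torusBase_succ (k := k) t; omega) hij
  refine ⟨c, hc, hspan.trans_eq ?_⟩
  have hN : 2 * k * (2 * k) = 2 * (2 * k ^ 2 - 1) + 2 := by
    have : 1 ≤ k ^ 2 := Nat.one_le_pow _ _ (Nat.pos_of_neZero k)
    rw [show 2 * k * (2 * k) = 4 * k ^ 2 by ring]; omega
  rw [pairLabel, hN, show (2 * (2 * k ^ 2 - 1) + 2 - 1) / 2 = 2 * k ^ 2 - 1 by omega]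
  omega

theorem torus_le_labelSpan {c : Fin (2 * k) × Fin (2 * k) → ℕ}
    (hc : IsRadioLabeling (cycleGraph (2 * k) □ cycleGraph (2 * k)) c) :
    2 + (2 * k ^ 2 - 1) * (k + 2) ≤ labelSpan c := by
  refine hc.two_add_mul_le_labelSpan (fun u v w => ?_) (by rw [torus_diam]; omega) ?_
  · rw [torus_diam]
    exact torus_isAntipodalMap.dist_add_dist_add_dist_le torus_connected u v w
  · have : 1 ≤ k ^ 2 := Nat.one_le_pow _ _ (Nat.pos_of_neZero k)
    simp only [Fintype.card_prod, Fintype.card_fin]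
    rw [show 2 * k * (2 * k) = 4 * k ^ 2 by ring]; omega

end EvenTorus

/-- for `n = 2k`, `k ≥ 2`, `rn(C_n □ C_n) = ((n² - 2)/2)(k + 2) + 2`. -/
theorem radioNumber_even (n k : ℕ) (hk : 2 ≤ k) (hn : n = 2 * k) :
    radioNumber (cycleGraph n □ cycleGraph n) = (n ^ 2 - 2) / 2 * (k + 2) + 2 := by
  subst hn
  have : NeZero k := ⟨by omega⟩
  have hL : ((2 * k) ^ 2 - 2) / 2 * (k + 2) + 2 = 2 + (2 * k ^ 2 - 1) * (k + 2) := by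
    rw [show (2 * k) ^ 2 = 2 * (2 * k ^ 2) by ring, add_comm]
    congr 2
    omega
  obtain ⟨c, hc, hspan⟩ := torus_exists_isRadioLabeling (k := k)
  rw [hL]
  exact radioNumber_eq_of_isRadioLabeling hc hspan fun _ => torus_le_labelSpan
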